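/- arXiv:2103.17180 — 6 statements merged into one kernel-verified Lean document; each statement's English description precedes it below -/
import Mathlib

section
/- The number of parking functions with m cars and n spots is |PF(m,n)| = (n−m+1)(n+1)^{m−1}, for 1 ≤ m ≤ n. -/
/-!
Pollak's circular argument. Read `g : Fin m → ZMod (n + 1)` as preferred spots on a circle of
`n + 1` spots. The rotated sequence `k ↦ (c + g k).val + 1` is a parking function iff, started
at position `-c`, the walk "spots passed minus cars preferring them" stays strictly below the
value it reaches after one full turn, where it has gained `t = n + 1 - m`. The walk rises by at
most one per step, so in a period window starting at a strict record the good starting points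
are exactly the strict records, one for each of the `t` values gained (cycle lemma). Hence every
`g` has exactly `n + 1 - m` good rotations `c`, and counting the pairs `(g, c)` through
`(g, c) ↦ (c + g, c)` instead gives `|PF(m, n)| * (n + 1) = (n + 1) ^ m * (n + 1 - m)`.
-/

/-- `π ∈ PF(m,n)`: a sequence in `[n]^m` satisfying the pigeonhole criterion
`#{k : π k ≤ i} ≥ m - n + i` for all `i = n-m+1, …, n`, which is equivalent to
all `m` cars parking successfully under the sequential parking rule. -/
def IsPF (m n : ℕ) (π : Fin m → ℕ) : Prop :=
  (∀ k, 1 ≤ π k ∧ π k ≤ n) ∧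
  ∀ i, i ≤ n → n - m + 1 ≤ i →
    m + i - n ≤ ((Finset.univ : Finset (Fin m)).filter (fun k => π k ≤ i)).card

open Finset

def IsGoodStart (S : ℕ → ℤ) (P t p : ℕ) : Prop :=
  ∀ i, 0 < i → i < P → S (p + i) < S p + t

def IsRecord (S : ℕ → ℤ) (q : ℕ) : Prop :=
  ∀ j < q, S j < S q

section CycleLemma

variable {S : ℕ → ℤ} {P t : ℕ}

theorem isRecord_strictMonoOn (S : ℕ → ℤ) : StrictMonoOn S {q | IsRecord S q} :=
  fun _ _ _ hb hab => hb _ hab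

theorem apply_le_apply_zero_add (hstep : ∀ j, S (j + 1) ≤ S j + 1) (j : ℕ) : S j ≤ S 0 + j := by
  induction j with
  | zero => simp
  | succ j ih => have := hstep j; push_cast; omega

theorem exists_isRecord_eq_of_lt (hstep : ∀ j, S (j + 1) ≤ S j + 1)
    (hgrow : ∀ v : ℤ, ∃ j, v ≤ S j) {v : ℤ} (hv : S 0 < v) : ∃ q, IsRecord S q ∧ S q = v := by
  have hex := hgrow v
  have hpos : Nat.find hex ≠ 0 := fun h => by have := Nat.find_spec hex; rw [h] at this; omega
  refine ⟨Nat.find hex, fun j hj => (not_le.1 (Nat.find_min hex hj)).trans_le (Nat.find_spec hex),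
    ?_⟩
  have hbefore := Nat.find_min hex (Nat.sub_one_lt hpos)
  have hjump := hstep (Nat.find hex - 1)
  rw [Nat.sub_add_cancel (Nat.one_le_iff_ne_zero.2 hpos)] at hjump
  have := Nat.find_spec hex
  omega

theorem apply_add_mul_period (hper : ∀ j, S (j + P) = S j + t) (j k : ℕ) :
    S (j + k * P) = S j + k * t := by
  induction k with
  | zero => simp
  | succ k ih => rw [add_one_mul, ← add_assoc, hper, ih]; push_cast; ring

theorem isGoodStart_add_period (hper : ∀ j, S (j + P) = S j + t) (p : ℕ) :
    IsGoodStart S P t (p + P) ↔ IsGoodStart S P t p := by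
  refine forall₃_congr fun i _ _ => ?_
  rw [add_right_comm, hper, hper]
  exact add_lt_add_iff_right _

theorem pos_of_apply_add_period (hper : ∀ j, S (j + P) = S j + t) (ht : 0 < t) : 0 < P :=
  Nat.pos_of_ne_zero fun h => by have := hper 0; subst h; simp at this; omega

theorem isRecord_iff_isGoodStart (hper : ∀ j, S (j + P) = S j + t) (ht : 0 < t) {q : ℕ}
    (hq : P ≤ q) : IsRecord S q ↔ IsGoodStart S P t q := by
  have hback := hper (q - P)
  rw [Nat.sub_add_cancel hq] at hback
  refine ⟨fun hrec i hi hiP => ?_, fun hgood j hj => ?_⟩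
  · have := hper (q + i - P)
    rw [Nat.sub_add_cancel (by omega)] at this
    have := hrec (q + i - P) (by omega)
    omega
  · have hgood' := (isGoodStart_add_period hper (q - P)).1 (by rwa [Nat.sub_add_cancel hq])
    have hP := pos_of_apply_add_period hper ht
    obtain ⟨k, r, hr, hkr⟩ : ∃ k r, r < P ∧ k * P + r = q - 1 - j :=
      ⟨_, _, Nat.mod_lt _ hP, Nat.div_add_mod' (q - 1 - j) P⟩
    have hshift := apply_add_mul_period hper j k
    have hkt : (0 : ℤ) ≤ k * t := by positivity
    -- `j + w` is the point of the residue class of `j` in the window `[q - P, q)`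
    generalize k * P = w at hkr hshift
    obtain hw | hw := eq_or_lt_of_le (show q - P ≤ j + w by omega)
    · rw [← hw] at hshift; omega
    · have := hgood' (j + w - (q - P)) (by omega) (by omega)
      rw [Nat.add_sub_cancel' hw.le] at this
      omega

theorem count_isGoodStart (hstep : ∀ j, S (j + 1) ≤ S j + 1) (hper : ∀ j, S (j + P) = S j + t)
    (ht : 0 < t) [DecidablePred (IsGoodStart S P t)] : Nat.count (IsGoodStart S P t) P = t := by
  classical
  have hgrow : ∀ v : ℤ, ∃ j, v ≤ S j := fun v => ⟨(v - S 0).toNat * P, by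
    rw [← zero_add ((v - S 0).toNat * P), apply_add_mul_period hper]
    nlinarith [Int.self_le_toNat (v - S 0), Nat.cast_nonneg (α := ℤ) (v - S 0).toNat,
      (Nat.one_le_cast (α := ℤ)).2 ht]⟩
  have hP := pos_of_apply_add_period hper ht
  obtain ⟨L, hL, hSL⟩ := exists_isRecord_eq_of_lt hstep hgrow (v := S 0 + P) (by omega)
  have hPL : P ≤ L := by have := apply_le_apply_zero_add hstep L; omega
  have hLP : IsRecord S (L + P) := (isRecord_iff_isGoodStart hper ht (by omega)).2 <|
    (isGoodStart_add_period hper L).2 ((isRecord_iff_isGoodStart hper ht hPL).1 hL)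
  have hmono := isRecord_strictMonoOn S
  calc Nat.count (IsGoodStart S P t) P
      = #{q ∈ Ico L (L + P) | IsGoodStart S P t q} :=
        (Nat.filter_Ico_card_eq_of_periodic L P _
          fun p => propext (isGoodStart_add_period hper p)).symm
    _ = #{q ∈ Ico L (L + P) | IsRecord S q} :=
        congr_arg card <| filter_congr fun q hq =>
          (isRecord_iff_isGoodStart hper ht (by have := (mem_Ico.1 hq).1; omega)).symm
    _ = #(Ico (S L) (S (L + P))) := by
        have hwindow : ∀ q, IsRecord S q → (q ∈ Ico L (L + P) ↔ S q ∈ Ico (S L) (S (L + P))) :=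
          fun q hq => by simp only [mem_Ico, hmono.le_iff_le hL hq, hmono.lt_iff_lt hq hLP]
        apply card_nbij S
        · intro q hq
          rw [mem_coe, mem_filter] at hq
          exact (hwindow q hq.2).1 hq.1
        · exact hmono.injOn.mono fun q hq => (mem_filter.1 hq).2
        · intro v hv
          rw [mem_coe, mem_Ico] at hv
          obtain ⟨q, hq, rfl⟩ := exists_isRecord_eq_of_lt hstep hgrow (v := v) (by omega)
          exact ⟨q, mem_filter.2 ⟨(hwindow q hq).2 (mem_Ico.2 hv), hq⟩, rfl⟩
    _ = t := by simp [hper]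

end CycleLemma

section Excess

variable {m n : ℕ}

/-- With `g k + 1` read as the spot preferred by car `k`, `excess g j` is the number of spots among
the first `j` (counted around the circle) minus the number of cars preferring one of them. -/
def excess (g : Fin m → ZMod (n + 1)) (j : ℕ) : ℤ :=
  j - ∑ s ∈ range j, (#{k | g k = s} : ℤ)

theorem excess_succ_le (g : Fin m → ZMod (n + 1)) (j : ℕ) :
    excess g (j + 1) ≤ excess g j + 1 := by
  simp only [excess, sum_range_succ, Nat.cast_add, Nat.cast_one]
  linarith [Nat.cast_nonneg (α := ℤ) #{k | g k = j}]

theorem card_sub_val_lt (g : Fin m → ZMod (n + 1)) (p : ℕ) {i : ℕ} (hi : i ≤ n + 1) :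
    #{k | (g k - p).val < i} = ∑ s ∈ range i, #{k | g k = (p + s : ℕ)} := by
  rw [card_eq_sum_card_fiberwise (f := fun k => (g k - p).val) (t := range i)
    fun k hk => mem_range.2 (mem_filter.1 hk).2]
  refine sum_congr rfl fun s hs => congr_arg card ?_
  have hsi := mem_range.1 hs
  ext k
  simp only [mem_filter, mem_univ, true_and]
  constructor
  · rintro ⟨-, h⟩
    rw [← sub_add_cancel (g k) (p : ZMod (n + 1)),
      ← ZMod.natCast_zmod_val (g k - p : ZMod (n + 1)), h]
    push_cast
    ring
  · intro h
    rw [h, Nat.cast_add, add_sub_cancel_left, ZMod.val_cast_of_lt (hsi.trans_le hi)]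
    exact ⟨hsi, rfl⟩

theorem excess_add (g : Fin m → ZMod (n + 1)) (p : ℕ) {i : ℕ} (hi : i ≤ n + 1) :
    excess g (p + i) = excess g p + i - #{k | (g k - p).val < i} := by
  rw [card_sub_val_lt g p hi, excess, excess, sum_range_add]
  push_cast
  ring

theorem excess_add_period (hmn : m ≤ n + 1) (g : Fin m → ZMod (n + 1)) (p : ℕ) :
    excess g (p + (n + 1)) = excess g p + (n + 1 - m : ℕ) := by
  rw [excess_add g p le_rfl, filter_true_of_mem fun k _ => ZMod.val_lt _, card_univ,
    Fintype.card_fin, Nat.cast_sub hmn]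
  push_cast
  ring

theorem isPF_add_iff_isGoodStart (hmn : m ≤ n) (g : Fin m → ZMod (n + 1)) (c : ZMod (n + 1)) :
    IsPF m n (fun k => (c + g k).val + 1) ↔
      IsGoodStart (excess g) (n + 1) (n + 1 - m) (-c).val := by
  have hW : ∀ i ≤ n + 1, excess g ((-c).val + i) =
      excess g (-c).val + i - #{k | (c + g k).val < i} := fun i hi => by
    simpa [sub_eq_add_neg, add_comm] using excess_add g (-c).val hi
  simp only [IsPF, IsGoodStart, Nat.add_one_le_iff, le_add_iff_nonneg_left, zero_le, true_and]
  constructor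
  · rintro ⟨-, hcount⟩ i hi0 hin
    rw [hW i hin.le]
    by_cases hi : n - m < i
    · have := hcount i (by omega) hi
      omega
    · omega
  · intro hgood
    have hcount : ∀ i, 0 < i → i ≤ n → m + i ≤ n + #{k | (c + g k).val < i} :=
      fun i hi0 hin => by
        have := hgood i hi0 (by omega)
        rw [hW i (by omega)] at this
        omega
    refine ⟨fun k => ?_, fun i hin hi => by have := hcount i (by omega) hin; omega⟩
    have hall := hcount n (k.pos.trans_le hmn) le_rfl
    refine card_filter_eq_iff.1 (le_antisymm (card_filter_le univ fun k => (c + g k).val < n) ?_)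
      k (mem_univ k)
    rw [card_univ, Fintype.card_fin]
    omega

end Excess

theorem card_mul_card_eq_sum_card_vadd {G X : Type*} [AddGroup G] [AddAction G X] [Fintype G]
    [Fintype X] (Q : X → Prop) :
    Nat.card {x // Q x} * Nat.card G = ∑ x, Nat.card {c : G // Q (c +ᵥ x)} := by
  classical
  have htranslate : ∀ c : G, Nat.card {x // Q (c +ᵥ x)} = Nat.card {x // Q x} := fun c =>
    Nat.card_congr ((AddAction.toPerm c).subtypeEquiv fun _ => Iff.rfl)
  calc Nat.card {x // Q x} * Nat.card G = ∑ c : G, Nat.card {x // Q (c +ᵥ x)} := by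
        rw [sum_congr rfl fun c _ => htranslate c, sum_const, card_univ, smul_eq_mul,
          Nat.card_eq_fintype_card (α := G), mul_comm]
    _ = ∑ x, Nat.card {c : G // Q (c +ᵥ x)} := by
        simp only [Nat.card_eq_fintype_card, Fintype.card_subtype]
        exact sum_card_bipartiteAbove_eq_sum_card_bipartiteBelow _

section Count

variable {m n : ℕ}

theorem card_isPF_add (hmn : m ≤ n) (g : Fin m → ZMod (n + 1)) :
    Nat.card {c : ZMod (n + 1) // IsPF m n fun k => (c + g k).val + 1} = n + 1 - m := by
  classical
  let Q := IsGoodStart (excess g) (n + 1) (n + 1 - m)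
  let e : {c : ZMod (n + 1) // Q (-c).val} ≃ {p // p ∈ {p ∈ range (n + 1) | Q p}} :=
    { toFun c := ⟨(-c.1).val, mem_filter.2 ⟨mem_range.2 (ZMod.val_lt _), c.2⟩⟩
      invFun p := ⟨-(p.1 : ZMod (n + 1)), by
        obtain ⟨hp, hQ⟩ := mem_filter.1 p.2
        simpa [ZMod.val_cast_of_lt (mem_range.1 hp)] using hQ⟩
      left_inv c := by simp
      right_inv p := by simp [ZMod.val_cast_of_lt (mem_range.1 (mem_filter.1 p.2).1)] }
  calc Nat.card {c : ZMod (n + 1) // IsPF m n fun k => (c + g k).val + 1}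
      = Nat.card {c : ZMod (n + 1) // Q (-c).val} :=
        Nat.card_congr (Equiv.subtypeEquivRight fun c => isPF_add_iff_isGoodStart hmn g c)
    _ = Nat.count Q (n + 1) := by
        rw [Nat.card_congr e, Nat.count_eq_card_filter_range, Nat.card_eq_finsetCard]
    _ = n + 1 - m :=
        count_isGoodStart (excess_succ_le g) (excess_add_period (by omega) g) (by omega)

theorem card_isPF_eq_card_zmod :
    Nat.card {π : Fin m → ℕ // IsPF m n π} =
      Nat.card {g : Fin m → ZMod (n + 1) // IsPF m n fun k => (g k).val + 1} := by
  refine (Nat.card_congr (Equiv.ofBijective (fun g => ⟨fun k => (g.1 k).val + 1, g.2⟩)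
    ⟨fun g g' h => Subtype.ext (funext fun k => ZMod.val_injective _ ?_), fun π => ?_⟩)).symm
  · simpa using congr_fun (congr_arg Subtype.val h) k
  · have hval : (fun k => ((π.1 k - 1 : ℕ) : ZMod (n + 1)).val + 1) = π.1 := funext fun k => by
      have := π.2.1 k
      rw [ZMod.val_cast_of_lt (by omega)]
      omega
    exact ⟨⟨_, (congr_arg (IsPF m n) hval).mpr π.2⟩, Subtype.ext hval⟩

theorem card_isPF_zmod_mul (hmn : m ≤ n) :
    Nat.card {g : Fin m → ZMod (n + 1) // IsPF m n fun k => (g k).val + 1} * (n + 1) =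
      (n + 1) ^ m * (n + 1 - m) :=
  calc _ = Nat.card {g : Fin m → ZMod (n + 1) // IsPF m n fun k => (g k).val + 1} *
        Nat.card (ZMod (n + 1)) := by rw [Nat.card_zmod]
    _ = ∑ g : Fin m → ZMod (n + 1), Nat.card {c : ZMod (n + 1) //
        IsPF m n fun k => ((c +ᵥ g) k).val + 1} := card_mul_card_eq_sum_card_vadd _
    _ = (n + 1) ^ m * (n + 1 - m) := by
        simp only [Pi.vadd_apply, vadd_eq_add, card_isPF_add hmn, sum_const, card_univ,
          Fintype.card_fun, ZMod.card, Fintype.card_fin, smul_eq_mul]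

end Count

/-- `|PF(m,n)| = (n - m + 1)(n + 1)^(m - 1)` for `1 ≤ m ≤ n`. -/
theorem card_PF (m n : ℕ) (hm : 1 ≤ m) (hmn : m ≤ n) :
    Nat.card {π : Fin m → ℕ // IsPF m n π} = (n - m + 1) * (n + 1) ^ (m - 1) := by
  obtain ⟨m, rfl⟩ := Nat.exists_eq_add_of_le' hm
  refine Nat.eq_of_mul_eq_mul_right n.add_one_pos ?_
  rw [card_isPF_eq_card_zmod, card_isPF_zmod_mul hmn, Nat.add_sub_cancel,
    show n + 1 - (m + 1) = n - (m + 1) + 1 by omega, pow_succ]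
  ring
end

section
/- For k ≥ n−m+1, the set A_{π₂,...,π_m} equals [k] if and only if (π₂,...,π_m) is a shuffle of a parking function α ∈ PF(m−n+k−1, k−1) and a word β' with β' − (k,...,k) ∈ PF(n−k, n−k); that is, exactly m−n+k−1 of the entries π₂,...,π_m are < k, none equal k, the subsequence of entries < k is in PF(m−n+k−1, k−1), and the subsequence of entries > k, after subtracting k from each, is in PF(n−k, n−k). -/
/-- `PF(m,n)` membership for a multiset of preferences (parking functions are
permutation invariant, so membership depends only on the multiset of values). -/
def IsPFM (m n : ℕ) (M : Multiset ℕ) : Prop :=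
  Multiset.card M = m ∧ (∀ x ∈ M, 1 ≤ x ∧ x ≤ n) ∧
  ∀ i, i ≤ n → n - m + 1 ≤ i → m + i - n ≤ Multiset.card (M.filter (· ≤ i))

/-!
Write `c i` for the number of entries of `ρ` that are at most `i`. Prepending a first preference
`j` yields a parking function iff `m + i - n < c i` for `n - m ≤ i < j` and `m + i - n ≤ c i` for
`j ≤ i ≤ n`. So the admissible `j` form an initial segment, and it is exactly `[k]` iff the strict
bounds hold below `k`, the weak bounds hold from `k` on, and `c k = m + k - n` (so that `k + 1`
fails). Together with `c k = m + k - n`, the strict bounds say that no entry equals `k` and that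
the entries `< k` form a parking function; since `c (k + i) - c k` counts the entries `> k` that
are at most `k + i`, the weak bounds are the classical parking condition for those entries
shifted down by `k`.
-/

open Multiset

theorem isPF_iff_isPFM {m n : ℕ} (π : Fin m → ℕ) : IsPF m n π ↔ IsPFM m n (List.ofFn π) := by
  have hcount : ∀ i, (Finset.univ.filter fun k => π k ≤ i).card =
      card ((List.ofFn π : Multiset ℕ).filter (· ≤ i)) := fun i => by
    rw [← Fin.univ_val_map, filter_map, card_map]
    rfl
  simp [IsPF, IsPFM, hcount, List.mem_ofFn]

section Counting

variable (M : Multiset ℕ)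

theorem card_filter_le_of_forall_le {i : ℕ} (h : ∀ x ∈ M, x ≤ i) :
    card (M.filter (· ≤ i)) = card M := by
  rw [filter_eq_self.2 h]

theorem card_filter_lt_filter_le_of_lt {i k : ℕ} (h : i < k) :
    card ((M.filter (· < k)).filter (· ≤ i)) = card (M.filter (· ≤ i)) := by
  rw [filter_filter]
  congr 1
  exact filter_congr fun x _ => by omega

theorem card_filter_le_eq_card_filter_lt_add_count (k : ℕ) :
    card (M.filter (· ≤ k)) = card (M.filter (· < k)) + count k M := by
  rw [← card_replicate (count k M) k, ← filter_eq', ← card_add,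
    ← filter_add_not (· < k) (M.filter (· ≤ k)), filter_filter, filter_filter]
  congr 2 <;> exact filter_congr fun x _ => by omega

theorem card_filter_le_add (k i : ℕ) :
    card (M.filter (· ≤ k + i)) =
      card (M.filter (· ≤ k)) + card (((M.filter (k < ·)).map (· - k)).filter (· ≤ i)) := by
  rw [← countP_eq_card_filter _ (map _ _), countP_map, filter_filter,
    ← filter_add_not (· ≤ k) (M.filter (· ≤ k + i)), card_add, filter_filter, filter_filter]
  congr 2 <;> exact filter_congr fun x _ => by omega

end Counting

theorem isPFM_cons_iff {m n j : ℕ} {M : Multiset ℕ} (hmn : m + 1 ≤ n) (hM : card M = m)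
    (hval : ∀ x ∈ M, 1 ≤ x ∧ x ≤ n) :
    IsPFM (m + 1) n (j ::ₘ M) ↔ (1 ≤ j ∧ j ≤ n) ∧
      (∀ i, n - m ≤ i → i < j → m + i - n < card (M.filter (· ≤ i))) ∧
      ∀ i, j ≤ i → i ≤ n → m + i - n ≤ card (M.filter (· ≤ i)) := by
  have hcons : ∀ i, card ((j ::ₘ M).filter (· ≤ i)) =
      card (M.filter (· ≤ i)) + if j ≤ i then 1 else 0 := by
    intro i
    split_ifs with h <;> simp [h]
  simp only [IsPFM, card_cons, hM, forall_mem_cons, hcons, true_and]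
  constructor
  · rintro ⟨⟨hj, -⟩, hcount⟩
    refine ⟨hj, fun i hi hij => ?_, fun i hji hin => ?_⟩
    · have := hcount i (by omega) (by omega)
      rw [if_neg (by omega)] at this
      omega
    · by_cases hi : n - m ≤ i
      · have := hcount i hin (by omega)
        rw [if_pos hji] at this
        omega
      · omega
  · rintro ⟨hj, hlt, hle⟩
    refine ⟨⟨hj, hval⟩, fun i hin hi => ?_⟩
    split_ifs with hji
    · have := hle i hji hin
      omega
    · have := hlt i (by omega) (by omega)
      omega

theorem forall_le_iff_isPFM_cons_iff {m n k : ℕ} {M : Multiset ℕ} (hmn : m + 1 ≤ n)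
    (hM : card M = m) (hval : ∀ x ∈ M, 1 ≤ x ∧ x ≤ n) (hk1 : n - m ≤ k) (hk2 : k ≤ n) :
    (∀ j, (1 ≤ j ∧ j ≤ k) ↔ IsPFM (m + 1) n (j ::ₘ M)) ↔
      ((∀ i, n - m ≤ i → i < k → m + i - n < card (M.filter (· ≤ i))) ∧
        card (M.filter (· ≤ k)) = m + k - n) ∧
      ∀ i, k ≤ i → i ≤ n → m + i - n ≤ card (M.filter (· ≤ i)) := by
  simp only [isPFM_cons_iff hmn hM hval]
  constructor
  · intro h
    obtain ⟨-, hlt, hle⟩ := (h k).1 ⟨by omega, le_rfl⟩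
    refine ⟨⟨hlt, le_antisymm ?_ (hle k le_rfl hk2)⟩, hle⟩
    rcases hk2.lt_or_eq with hkn | rfl
    · by_contra! hgt
      have := (h (k + 1)).2 ⟨by omega, fun i hi hik => ?_, fun i hik hin => hle i (by omega) hin⟩
      · omega
      · rcases (Nat.lt_succ_iff.1 hik).lt_or_eq with hik | rfl
        exacts [hlt i hi hik, hgt]
    · rw [card_filter_le_of_forall_le M fun x hx => (hval x hx).2, hM]
      omega
  · rintro ⟨⟨hlt, hk⟩, hle⟩ j
    constructor
    · rintro ⟨hj1, hjk⟩
      refine ⟨⟨hj1, by omega⟩, fun i hi hij => hlt i hi (by omega), fun i hji hin => ?_⟩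
      rcases lt_or_ge i k with hik | hik
      · by_cases hi : n - m ≤ i
        · exact (hlt i hi hik).le
        · omega
      · exact hle i hik hin
    · rintro ⟨⟨hj1, -⟩, hjlt, -⟩
      refine ⟨hj1, not_lt.1 fun hkj => ?_⟩
      have := hjlt k hk1 hkj
      omega

theorem notMem_and_isPFM_filter_lt_iff {m n k : ℕ} {M : Multiset ℕ} (hmn : m + 1 ≤ n)
    (hval : ∀ x ∈ M, 1 ≤ x) (hk1 : n - m ≤ k) :
    k ∉ M ∧ IsPFM (m + 1 + k - n - 1) (k - 1) (M.filter (· < k)) ↔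
      (∀ i, n - m ≤ i → i < k → m + i - n < card (M.filter (· ≤ i))) ∧
      card (M.filter (· ≤ k)) = m + k - n := by
  have hsplit := card_filter_le_eq_card_filter_lt_add_count M k
  have hmem : ∀ x ∈ M.filter (· < k), 1 ≤ x ∧ x ≤ k - 1 := fun x hx => by
    rw [mem_filter] at hx
    have := hval x hx.1
    omega
  rw [← count_eq_zero]
  simp only [IsPFM, and_iff_right hmem]
  constructor
  · rintro ⟨hcount, hcard, hpf⟩
    refine ⟨fun i hi hik => ?_, by omega⟩
    have := hpf i (by omega) (by omega)
    rw [card_filter_lt_filter_le_of_lt M hik] at this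
    omega
  · rintro ⟨hlt, hk⟩
    have hcard : m + k - n ≤ card (M.filter (· < k)) := by
      rcases hk1.lt_or_eq with hk1 | rfl
      · have := hlt (k - 1) (by omega) (by omega)
        rw [← card_filter_lt_filter_le_of_lt M (by omega : k - 1 < k),
          card_filter_le_of_forall_le _ fun x hx => (hmem x hx).2] at this
        omega
      · omega
    refine ⟨by omega, by omega, fun i hik hi => ?_⟩
    rw [card_filter_lt_filter_le_of_lt M (by omega)]
    have := hlt i (by omega) (by omega)
    omega

theorem isPFM_map_sub_filter_gt_iff {m n k : ℕ} {M : Multiset ℕ} (hM : card M = m)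
    (hval : ∀ x ∈ M, x ≤ n) (hk1 : n - m ≤ k) (hk2 : k ≤ n)
    (hk : card (M.filter (· ≤ k)) = m + k - n) :
    IsPFM (n - k) (n - k) ((M.filter (k < ·)).map (· - k)) ↔
      ∀ i, k ≤ i → i ≤ n → m + i - n ≤ card (M.filter (· ≤ i)) := by
  set H := (M.filter (k < ·)).map (· - k)
  have hshift : ∀ i,
      card (M.filter (· ≤ k + i)) = card (M.filter (· ≤ k)) + card (H.filter (· ≤ i)) :=
    card_filter_le_add M k
  have hmem : ∀ x ∈ H, 1 ≤ x ∧ x ≤ n - k := fun x hx => by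
    obtain ⟨y, hy, rfl⟩ := mem_map.1 hx
    rw [mem_filter] at hy
    have := hval y hy.1
    omega
  have hcard : card H = n - k := by
    have := hshift (n - k)
    rw [Nat.add_sub_cancel' hk2, card_filter_le_of_forall_le M hval, hM,
      card_filter_le_of_forall_le H fun x hx => (hmem x hx).2] at this
    omega
  simp only [IsPFM, hcard, and_iff_right hmem, true_and]
  constructor
  · intro hpf i hki hin
    obtain ⟨d, rfl⟩ := Nat.exists_eq_add_of_le hki
    rw [hshift]
    rcases d.eq_zero_or_pos with rfl | hd
    · omega
    · have := hpf d (by omega) (by omega)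
      omega
  · intro h i hi hin
    have := h (k + i) (by omega) (by omega)
    rw [hshift] at this
    omega

/-- Parking function shuffle: for `k ≥ n - m + 1` (here `m + 1` cars in total),
the set of feasible first preferences equals `[k]` iff no remaining entry
equals `k`, the subsequence of entries `< k` is a parking function in
`PF(m - n + k, k - 1)` (in particular there are exactly `m + 1 - n + k - 1` such
entries), and the subsequence of entries `> k`, shifted down by `k`, is a
classical parking function in `PF(n - k, n - k)`. -/
theorem shuffle_characterization (m n k : ℕ) (hmn : m + 1 ≤ n)
    (hk1 : n - m ≤ k) (hk2 : k ≤ n) (ρ : Fin m → ℕ)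
    (hval : ∀ i, 1 ≤ ρ i ∧ ρ i ≤ n) :
    (∀ j, (1 ≤ j ∧ j ≤ k) ↔ IsPF (m + 1) n (Fin.cons j ρ)) ↔
      ((∀ i, ρ i ≠ k) ∧
        IsPFM (m + 1 + k - n - 1) (k - 1)
          ((List.ofFn ρ : Multiset ℕ).filter (· < k)) ∧
        IsPFM (n - k) (n - k)
          (((List.ofFn ρ : Multiset ℕ).filter (fun x => k < x)).map (fun x => x - k))) := by
  simp only [isPF_iff_isPFM, List.ofFn_cons, ← cons_coe]
  have hM : card (List.ofFn ρ : Multiset ℕ) = m := by simp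
  have hvalM : ∀ x ∈ (List.ofFn ρ : Multiset ℕ), 1 ≤ x ∧ x ≤ n := by simpa using hval
  have hnotMem : (∀ i, ρ i ≠ k) ↔ k ∉ (List.ofFn ρ : Multiset ℕ) := by simp
  rw [forall_le_iff_isPFM_cons_iff hmn hM hvalM hk1 hk2, hnotMem, ← and_assoc,
    notMem_and_isPFM_filter_lt_iff hmn (fun x hx => (hvalM x hx).1) hk1]
  exact and_congr_right fun h =>
    (isPFM_map_sub_filter_gt_iff hM (fun x hx => (hvalM x hx).2) hk1 hk2 h.2).symm
end

section
/- For any positive integer s and nonnegative integer m, Σ_{x₁+⋯+x_s=m, x_i ≥ 0} m!/(x₁!⋯x_s!) · (x₁+1)^{x₁−1} ⋯ (x_s+1)^{x_s−1} = s(m+s)^{m−1}. -/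
/-!
The Abel polynomials `Aₙ(x) = x (x + n)^(n-1)` (with `A₀ = 1`) are of binomial type:
`Aₙ(x + y) = ∑ (n choose i) Aᵢ(x) Aⱼ(y)` over `i + j = n` (Abel's identity). For fixed `y` both
sides are polynomials in `x` that agree at `x = 0`, because `Aₙ(0) = δₙ₀`, and whose derivatives
agree by induction on `n`, because `A'ₙ₊₁(x) = (n + 1) Aₙ(x + 1)`.
Iterating the binomial identity over the parts of a composition gives
`∑ multinomial(x) ∏ p_{xᵢ}(aᵢ) = pₘ(∑ aᵢ)` for any sequence of binomial type. With `p = A` and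
all `aᵢ = 1` the left side is the sum in question, since `Aₙ(1) = (n + 1)^(n-1)`, and the right
side is `Aₘ(s) = s (m + s)^(m-1)`.
-/

open Finset Polynomial

section BinomialType

variable {R : Type*} [CommSemiring R]

def IsBinomialType (p : ℕ → R → R) : Prop :=
  ∀ n x y, p n (x + y) = ∑ ij ∈ antidiagonal n, n.choose ij.1 * p ij.1 x * p ij.2 y

theorem IsBinomialType.sum_piAntidiag_multinomial_mul_prod {p : ℕ → R → R}
    (hp : IsBinomialType p) (hp₀ : ∀ n, p n 0 = if n = 0 then 1 else 0)
    {ι : Type*} [DecidableEq ι] (s : Finset ι) (a : ι → R) (m : ℕ) :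
    ∑ x ∈ piAntidiag s m, (Nat.multinomial s x : R) * ∏ i ∈ s, p (x i) (a i) =
      p m (∑ i ∈ s, a i) := by
  induction s using Finset.cons_induction generalizing m with
  | empty => rw [piAntidiag_empty, sum_empty, hp₀]; split_ifs <;> simp
  | cons i s hi ih =>
    rw [piAntidiag_cons, sum_disjiUnion, sum_cons, hp]
    refine sum_congr rfl fun kj hkj => ?_
    rw [HasAntidiagonal.mem_antidiagonal] at hkj
    rw [sum_map, ← ih, mul_sum]
    refine sum_congr rfl fun x hx => ?_
    rw [mem_piAntidiag] at hx
    rw [addRightEmbedding_apply]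
    have hxi : x i = 0 := by_contra fun h => hi (hx.2 i h)
    set g := x + fun t => if t = i then kj.1 else 0
    have hgi : g i = kj.1 := by simp [g, hxi]
    have hgs : ∀ t ∈ s, g t = x t := fun t ht => by simp [g, ne_of_mem_of_not_mem ht hi]
    rw [Nat.multinomial_cons, prod_cons, hgi, sum_congr rfl hgs, hx.1, hkj,
      Nat.multinomial_congr hgs, prod_congr rfl fun t ht => by rw [hgs t ht]]
    push_cast
    ring

end BinomialType

namespace Polynomial

variable {R : Type*} [CommRing R]

noncomputable def abel : ℕ → R[X]
  | 0 => 1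
  | n + 1 => X * (X + C ((n : R) + 1)) ^ n

@[simp] theorem abel_zero : (abel 0 : R[X]) = 1 := rfl

theorem abel_succ (n : ℕ) : (abel (n + 1) : R[X]) = X * (X + C ((n : R) + 1)) ^ n := rfl

@[simp] theorem eval_zero_abel_succ (n : ℕ) : (abel (n + 1) : R[X]).eval 0 = 0 := by
  simp [abel_succ]

theorem eval_zero_abel (n : ℕ) : (abel n : R[X]).eval 0 = if n = 0 then 1 else 0 := by
  cases n <;> simp

theorem derivative_abel_succ (n : ℕ) :
    derivative (abel (n + 1) : R[X]) = C ((n : R) + 1) * (abel n).comp (X + 1) := by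
  cases n with
  | zero => simp [abel_succ]
  | succ n =>
    rw [abel_succ, abel_succ, derivative_mul, derivative_X, derivative_X_add_C_pow]
    simp only [mul_comp, X_comp, pow_comp, add_comp, natCast_comp, one_comp, Nat.cast_add,
      Nat.cast_one, Nat.add_sub_cancel, map_add, map_one, map_natCast, pow_succ]
    ring

theorem eq_of_derivative_eq_of_eval_zero_eq [IsAddTorsionFree R] {p q : R[X]}
    (hd : derivative p = derivative q) (h0 : p.eval 0 = q.eval 0) : p = q := by
  have h := eq_C_of_derivative_eq_zero (p := p - q) (by rw [derivative_sub, hd, sub_self])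
  rwa [coeff_zero_eq_eval_zero, eval_sub, h0, sub_self, map_zero, sub_eq_zero] at h

theorem abel_comp_X_add_C [IsAddTorsionFree R] (n : ℕ) (y : R) :
    (abel n).comp (X + C y) =
      ∑ ij ∈ antidiagonal n, C (n.choose ij.1 * (abel ij.2).eval y) * abel ij.1 := by
  induction n with
  | zero => simp
  | succ n ih =>
    apply eq_of_derivative_eq_of_eval_zero_eq
    · calc derivative ((abel (n + 1)).comp (X + C y))
          = C ((n : R) + 1) * ((abel n).comp (X + C y)).comp (X + 1) := by
            simp only [derivative_comp, derivative_abel_succ, derivative_add, derivative_X,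
              derivative_C, add_zero, one_mul, mul_comp, C_comp, comp_assoc, add_comp, X_comp,
              one_comp, add_right_comm]
        _ = ∑ ij ∈ antidiagonal n, C ((n : R) + 1) *
              (C (n.choose ij.1 * (abel ij.2).eval y) * (abel ij.1).comp (X + 1)) := by
            simp only [ih, sum_comp, mul_comp, C_comp, mul_sum]
        _ = derivative (∑ ij ∈ antidiagonal (n + 1),
              C ((n + 1).choose ij.1 * (abel ij.2).eval y) * abel ij.1) := by
            rw [derivative_sum, Nat.sum_antidiagonal_succ]
            simp only [derivative_C_mul, abel_zero, derivative_one, mul_zero, zero_add,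
              derivative_abel_succ]
            refine sum_congr rfl fun ij _ => ?_
            have hchoose :
                ((n + 1).choose (ij.1 + 1) : R) * (ij.1 + 1) = (n + 1) * n.choose ij.1 := by
              exact_mod_cast congrArg (Nat.cast : ℕ → R) (Nat.add_one_mul_choose_eq n ij.1).symm
            rw [← mul_assoc, ← mul_assoc, ← C_mul, ← C_mul, mul_right_comm, hchoose, mul_assoc]
    · rw [eval_comp, eval_finsetSum, Nat.sum_antidiagonal_succ]
      simp

theorem isBinomialType_abel [IsAddTorsionFree R] :
    IsBinomialType fun n (x : R) => (abel n).eval x := by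
  intro n x y
  have h := congrArg (eval x) (abel_comp_X_add_C n y)
  simp only [eval_comp, eval_add, eval_X, eval_C, eval_finsetSum, eval_mul] at h
  exact h.trans (sum_congr rfl fun ij _ => by ring)

theorem eval_abel {K : Type*} [Field K] {x : K} (hx : x ≠ 0) (n : ℕ) :
    (abel n).eval x = x * (x + n) ^ ((n : ℤ) - 1) := by
  cases n with
  | zero => simp [hx]
  | succ n => simp [abel_succ]

end Polynomial

/-- For a positive integer `s` and nonnegative integer `m`,
`Σ_{x₁+⋯+x_s=m} m!/(x₁!⋯x_s!) · (x₁+1)^(x₁-1) ⋯ (x_s+1)^(x_s-1) = s (m+s)^(m-1)`,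
with negative exponents interpreted as integer powers in `ℚ`. -/
theorem forest_count_identity (s m : ℕ) (hs : 1 ≤ s) :
    ∑ x ∈ Finset.Nat.antidiagonalTuple s m,
        (Nat.multinomial Finset.univ x : ℚ) *
          ∏ i, ((x i : ℚ) + 1) ^ ((x i : ℤ) - 1) =
      (s : ℚ) * ((m : ℚ) + s) ^ ((m : ℤ) - 1) := by
  have hs₀ : (s : ℚ) ≠ 0 := Nat.cast_ne_zero.mpr (Nat.one_le_iff_ne_zero.mp hs)
  calc _ = ∑ x ∈ piAntidiag univ m, (Nat.multinomial univ x : ℚ) * ∏ i, (abel (x i)).eval 1 := by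
        rw [piAntidiag_univ_fin_eq_antidiagonalTuple]
        simp only [eval_abel one_ne_zero, one_mul, add_comm (1 : ℚ)]
    _ = (abel m).eval (∑ _i : Fin s, (1 : ℚ)) :=
        isBinomialType_abel.sum_piAntidiag_multinomial_mul_prod eval_zero_abel _ _ m
    _ = _ := by rw [sum_const, card_univ, Fintype.card_fin, nsmul_one, eval_abel hs₀, add_comm]
end

section
/- For n ≥ 0 and x, y > 0, Σ_{s=0}^{n} C(n,s) (x+s)^{s−1} (y+n−s)^{n−s−1} = (x^{−1} + y^{−1})(x+y+n)^{n−1}. -/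
/-!
Abel's identity `A_n(x, y; -1, 0) = x⁻¹ (x + y + n)ⁿ` is proved by induction on `n` as a
polynomial identity in `y`: the `y`-derivative of either side is `n` times the previous case
with `y` shifted by `1`, and both sides vanish at `y = -(x + n)`, the left one because it becomes
an `n`-th finite difference of the polynomial `(x + s)ⁿ⁻¹` of degree `n - 1`. The reflection
`s ↦ n - s` gives `A_n(x, y; 0, -1) = y⁻¹ (x + y + n)ⁿ`, and splitting `x + y + n` as
`(x + s) + (y + n - s)` in each term gives `(x + y + n) A_n(x, y; -1, -1) = A_n(x, y; 0, -1) +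
A_n(x, y; -1, 0)`.
-/

open Finset Polynomial

theorem sum_range_alternating_choose_mul_add_pow_eq_zero {R : Type*} [CommRing R] {m n : ℕ}
    (h : m < n) (x : R) :
    ∑ s ∈ range (n + 1), (-1 : R) ^ (n - s) * n.choose s * (x + s) ^ m = 0 := by
  have hΔ := fwdDiff_iter_eq_sum_shift (1 : R) (fun r ↦ r ^ m) n x
  rw [fwdDiff_iter_pow_eq_zero_of_lt h] at hΔ
  simpa [zsmul_eq_mul] using hΔ.symm

theorem Polynomial.eq_of_derivative_eq_of_eval_eq {R : Type*} [Ring R] [IsAddTorsionFree R]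
    {p q : R[X]} (hd : derivative p = derivative q) (a : R) (he : p.eval a = q.eval a) :
    p = q := by
  have hconst := eq_C_of_derivative_eq_zero (p := p - q) (by rw [derivative_sub, hd, sub_self])
  have hzero : (p - q).coeff 0 = 0 := by
    rw [← eval_C (a := (p - q).coeff 0) (x := a), ← hconst, eval_sub, he, sub_self]
  rwa [hzero, map_zero, sub_eq_zero] at hconst

section Abel

variable {K : Type*} [Field K]

/-- `A_n(x, y; p, q)`. -/
def abelSum (n : ℕ) (x y : K) (p q : ℤ) : K :=
  ∑ s ∈ range (n + 1),
    (n.choose s : K) * (x + s) ^ ((s : ℤ) + p) * (y + n - s) ^ ((n : ℤ) - s + q)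

theorem abelSum_comm (n : ℕ) (x y : K) (p q : ℤ) : abelSum n x y p q = abelSum n y x q p := by
  rw [abelSum, ← sum_range_reflect]
  refine sum_congr rfl fun s hs ↦ ?_
  have hs : s ≤ n := Nat.lt_succ_iff.mp (mem_range.mp hs)
  rw [show n + 1 - 1 - s = n - s by omega, Nat.choose_symm hs, Nat.cast_sub hs, Nat.cast_sub hs]
  ring_nf

theorem abelSum_mul (n : ℕ) {x y : K} (hx : ∀ s ≤ n, x + s ≠ 0) (hy : ∀ s ≤ n, y + s ≠ 0)
    (p q : ℤ) :
    (x + y + n) * abelSum n x y (p - 1) (q - 1) =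
      abelSum n x y p (q - 1) + abelSum n x y (p - 1) q := by
  rw [abelSum, abelSum, abelSum, mul_sum, ← sum_add_distrib]
  refine sum_congr rfl fun s hs ↦ ?_
  have hs : s ≤ n := Nat.lt_succ_iff.mp (mem_range.mp hs)
  have hys : y + n - s ≠ 0 := by
    simpa [Nat.cast_sub hs, add_sub_assoc] using hy (n - s) (Nat.sub_le n s)
  rw [show (s : ℤ) + p = (s : ℤ) + (p - 1) + 1 by ring, zpow_add_one₀ (hx s hs),
    show (n : ℤ) - s + q = (n : ℤ) - s + (q - 1) + 1 by ring, zpow_add_one₀ hys]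
  ring

/-- Evaluated at `y`, this is `A_n(x, y + t; -1, 0)`. -/
noncomputable def abelPoly (x t : K) (n : ℕ) : K[X] :=
  ∑ s ∈ range (n + 1), C (n.choose s * (x + s) ^ ((s : ℤ) - 1)) * (X + C (t + n - s)) ^ (n - s)

theorem derivative_abelPoly (x t : K) (n : ℕ) :
    derivative (abelPoly x t (n + 1)) = C ((n : K) + 1) * abelPoly x (t + 1) n := by
  rw [abelPoly, abelPoly, derivative_sum, sum_range_succ, Nat.sub_self, pow_zero, mul_one,
    derivative_C, add_zero, mul_sum]
  refine sum_congr rfl fun s hs ↦ ?_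
  have hs : s ≤ n := Nat.lt_succ_iff.mp (mem_range.mp hs)
  have hchoose : ((n + 1).choose s : K) * ((n + 1 - s : ℕ) : K) = (n + 1) * n.choose s := by
    rw [← Nat.cast_mul, ← Nat.choose_mul_succ_eq]
    push_cast
    ring
  rw [derivative_C_mul, derivative_X_add_C_pow, show n + 1 - s - 1 = n - s by omega,
    ← mul_assoc, ← C_mul, ← mul_assoc, ← C_mul, Nat.cast_add_one,
    show t + (n + 1) - s = t + 1 + n - s by ring]
  congr 2
  linear_combination (x + s) ^ ((s : ℤ) - 1) * hchoose

theorem eval_abelPoly_succ {n : ℕ} {x : K} (hx : ∀ s ≤ n + 1, x + s ≠ 0) (t : K) :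
    (abelPoly x t (n + 1)).eval (-(x + t + (n + 1))) = 0 := by
  rw [abelPoly, eval_finsetSum,
    ← sum_range_alternating_choose_mul_add_pow_eq_zero (Nat.lt_succ_self n) x]
  refine sum_congr rfl fun s hs ↦ ?_
  have hs : s ≤ n + 1 := Nat.lt_succ_iff.mp (mem_range.mp hs)
  have hpow : (x + s) ^ ((s : ℤ) - 1) * (x + s) ^ (n + 1 - s) = (x + s) ^ n := by
    rw [← zpow_natCast, ← zpow_add₀ (hx s hs), ← zpow_natCast]
    congr 1
    omega
  simp only [eval_mul, eval_C, eval_pow, eval_add, eval_X, Nat.cast_add_one]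
  rw [show -(x + t + (n + 1)) + (t + (n + 1) - s) = -1 * (x + s) by ring, mul_pow, ← hpow]
  ring

variable [CharZero K]

theorem abelPoly_eq {n : ℕ} {x : K} (hx : ∀ s ≤ n, x + s ≠ 0) (t : K) :
    abelPoly x t n = C x⁻¹ * (X + C (x + t + n)) ^ n := by
  induction n generalizing t with
  | zero => simp [abelPoly]
  | succ n ih =>
    refine eq_of_derivative_eq_of_eval_eq ?_ (-(x + t + (n + 1))) ?_
    · rw [derivative_abelPoly, ih (fun s hs ↦ hx s (by omega)), derivative_C_mul,
        derivative_X_add_C_pow, Nat.add_sub_cancel, Nat.cast_add_one,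
        show x + (t + 1) + n = x + t + (n + 1) by ring]
      ring
    · rw [eval_abelPoly_succ hx, eval_mul, eval_pow, eval_add, eval_X, eval_C, eval_C,
        Nat.cast_add_one, neg_add_cancel, zero_pow n.succ_ne_zero, mul_zero]

theorem abelSum_neg_one_zero {n : ℕ} {x : K} (hx : ∀ s ≤ n, x + s ≠ 0) (y : K) :
    abelSum n x y (-1) 0 = x⁻¹ * (x + y + n) ^ n := by
  have h := congrArg (eval y) (abelPoly_eq hx 0)
  simp only [abelPoly, eval_finsetSum, eval_mul, eval_C, eval_pow, eval_add, eval_X,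
    zero_add] at h
  rw [abelSum, show x + y + n = y + (x + 0 + n) by ring, ← h]
  refine sum_congr rfl fun s hs ↦ ?_
  have hs : s ≤ n := Nat.lt_succ_iff.mp (mem_range.mp hs)
  rw [← sub_eq_add_neg, add_zero, ← Nat.cast_sub hs, zpow_natCast, add_sub_assoc]

theorem abelSum_zero_neg_one {n : ℕ} {y : K} (hy : ∀ s ≤ n, y + s ≠ 0) (x : K) :
    abelSum n x y 0 (-1) = y⁻¹ * (x + y + n) ^ n := by
  rw [abelSum_comm, abelSum_neg_one_zero hy, add_comm y]

theorem abelSum_neg_one_neg_one {n : ℕ} {x y : K} (hx : ∀ s ≤ n, x + s ≠ 0)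
    (hy : ∀ s ≤ n, y + s ≠ 0) (hxy : x + y + n ≠ 0) :
    abelSum n x y (-1) (-1) = (x⁻¹ + y⁻¹) * (x + y + n) ^ ((n : ℤ) - 1) := by
  have h := abelSum_mul n hx hy 0 0
  rw [zero_sub, abelSum_zero_neg_one hy, abelSum_neg_one_zero hx] at h
  apply mul_left_cancel₀ hxy
  rw [h, zpow_sub_one₀ hxy, zpow_natCast]
  field_simp
  ring

end Abel

/-- Abel's binomial theorem, case `A_n(x, y; -1, -1)`:
`Σ_{s=0}^{n} C(n,s) (x+s)^(s-1) (y+n-s)^(n-s-1) = (x⁻¹ + y⁻¹)(x+y+n)^(n-1)`. -/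
theorem abel_neg_one_neg_one (n : ℕ) (x y : ℝ) (hx : 0 < x) (hy : 0 < y) :
    ∑ s ∈ Finset.range (n + 1),
        (n.choose s : ℝ) * (x + s) ^ ((s : ℤ) - 1) * (y + n - s) ^ ((n : ℤ) - s - 1) =
      (x⁻¹ + y⁻¹) * (x + y + n) ^ ((n : ℤ) - 1) :=
  abelSum_neg_one_neg_one (fun s _ ↦ by positivity) (fun s _ ↦ by positivity) (by positivity)
end

section
/- For n ≥ 0 and x > 0, y ≥ 0, Σ_{s=0}^{n} C(n,s) (x+s)^{s−1} (y+n−s)^{n−s} = x^{−1}(x+y+n)^n. -/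
/-! With `z = x + y + n` we have `y + n - s = z - (x + s)`; expand `(z - (x + s)) ^ (n - s)`
binomially and exchange the two sums. By the trinomial revision
`C(n,s) C(n-s,j) = C(n,j) C(n-j,s)`, the coefficient of `C(n,j) z ^ j` becomes the `(n - j)`-th
forward difference at `x` of `r ↦ r ^ (n - j - 1)`, which vanishes unless `j = n`, where it is
`x⁻¹`. -/

open Finset

theorem Nat.choose_mul_choose_sub_comm (n s j : ℕ) :
    n.choose s * (n - s).choose j = n.choose j * (n - j).choose s := by
  calc n.choose s * (n - s).choose j = n.choose (s + j) * (s + j).choose s := by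
        rw [Nat.choose_mul (Nat.le_add_right s j), Nat.add_sub_cancel_left]
    _ = n.choose (j + s) * (j + s).choose j := by
        rw [add_comm s j, Nat.choose_symm_add]
    _ = n.choose j * (n - j).choose s := by
        rw [Nat.choose_mul (Nat.le_add_right j s), Nat.add_sub_cancel_left]

section Field

variable {K : Type*} [Field K]

theorem zpow_natCast_sub_one_mul_pow {a : K} {s : ℕ} (h : a ≠ 0 ∨ s ≠ 0) (k : ℕ) :
    a ^ ((s : ℤ) - 1) * a ^ k = a ^ (((s + k : ℕ) : ℤ) - 1) := by
  rw [← zpow_natCast a k, ← zpow_add' (by rcases h with h | h <;> [left; right] <;> omega)]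
  push_cast
  ring_nf

theorem zpow_natCast_sub_one_mul_sub_pow {a : K} {s n : ℕ} (h : a ≠ 0 ∨ s ≠ 0) (hs : s ≤ n)
    (z : K) :
    a ^ ((s : ℤ) - 1) * (z - a) ^ (n - s) = ∑ j ∈ range (n - s + 1),
      ((n - s).choose j : K) * z ^ j * (-1) ^ (n - j - s) * a ^ (((n - j : ℕ) : ℤ) - 1) := by
  rw [sub_eq_add_neg z a, add_pow, mul_sum]
  refine sum_congr rfl fun j hj ↦ ?_
  have hj : j ≤ n - s := Nat.lt_succ_iff.mp (mem_range.mp hj)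
  have hpow : a ^ ((s : ℤ) - 1) * a ^ (n - j - s) = a ^ (((n - j : ℕ) : ℤ) - 1) := by
    rw [zpow_natCast_sub_one_mul_pow h, Nat.add_sub_of_le (by omega)]
  rw [neg_pow, Nat.sub_right_comm, ← hpow]
  ring

theorem sum_neg_one_pow_mul_choose_mul_zpow_natCast_sub_one (m : ℕ) (x : K) :
    ∑ s ∈ range (m + 1), (-1) ^ (m - s) * (m.choose s : K) * (x + s) ^ ((m : ℤ) - 1) =
      if m = 0 then x⁻¹ else 0 := by
  cases m with
  | zero => simp
  | succ m =>
    have h := congr_fun (fwdDiff_iter_pow_eq_zero_of_lt (R := K) (Nat.lt_succ_self m)) x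
    rw [fwdDiff_iter_eq_sum_shift] at h
    simpa [zsmul_eq_mul] using h

theorem sum_choose_mul_zpow_sub_one_mul_sub_pow {x : K} (hx : x ≠ 0) (z : K) (n : ℕ) :
    ∑ s ∈ range (n + 1), (n.choose s : K) * (x + s) ^ ((s : ℤ) - 1) * (z - (x + s)) ^ (n - s) =
      x⁻¹ * z ^ n := by
  have expand : ∀ s ∈ range (n + 1),
      (n.choose s : K) * (x + s) ^ ((s : ℤ) - 1) * (z - (x + s)) ^ (n - s) =
        ∑ j ∈ range (n - s + 1), (n.choose j : K) * z ^ j *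
          ((-1) ^ (n - j - s) * ((n - j).choose s : K) * (x + s) ^ (((n - j : ℕ) : ℤ) - 1)) := by
    intro s hs
    -- only the `s = 0` term carries a negative power
    have hxs : x + s ≠ 0 ∨ s ≠ 0 := by
      rcases eq_or_ne s 0 with rfl | h
      · simpa using hx
      · exact Or.inr h
    rw [mul_assoc, zpow_natCast_sub_one_mul_sub_pow hxs (Nat.lt_succ_iff.mp (mem_range.mp hs)),
      mul_sum]
    refine sum_congr rfl fun j _ ↦ ?_
    have hchoose : (n.choose s : K) * (n - s).choose j = n.choose j * (n - j).choose s := by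
      rw [← Nat.cast_mul, ← Nat.cast_mul, Nat.choose_mul_choose_sub_comm]
    linear_combination z ^ j * (-1) ^ (n - j - s) * (x + s) ^ (((n - j : ℕ) : ℤ) - 1) * hchoose
  calc _ = ∑ j ∈ range (n + 1), (n.choose j : K) * z ^ j * ∑ s ∈ range (n - j + 1),
        (-1) ^ (n - j - s) * ((n - j).choose s : K) * (x + s) ^ (((n - j : ℕ) : ℤ) - 1) := by
        rw [sum_congr rfl expand, sum_comm' (s' := fun j ↦ range (n - j + 1)) (t' := range (n + 1))]
        · simp_rw [mul_sum]
        · intro s j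
          simp only [mem_range]
          omega
    _ = ∑ j ∈ range (n + 1), (n.choose j : K) * z ^ j * if n - j = 0 then x⁻¹ else 0 := by
        simp_rw [sum_neg_one_pow_mul_choose_mul_zpow_natCast_sub_one]
    _ = x⁻¹ * z ^ n := by
        rw [sum_eq_single_of_mem n (self_mem_range_succ n) fun j hj hjn ↦ ?_]
        · simp [mul_comm]
        · have : n - j ≠ 0 := by have := mem_range.mp hj; omega
          simp [this]

end Field

theorem abel_neg_one_zero_general (n : ℕ) (x y : ℝ) (hx : 0 < x) :
    ∑ s ∈ Finset.range (n + 1),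
        (n.choose s : ℝ) * (x + s) ^ ((s : ℤ) - 1) * (y + n - s) ^ (n - s) =
      x⁻¹ * (x + y + n) ^ n := by
  have h := sum_choose_mul_zpow_sub_one_mul_sub_pow hx.ne' (x + y + n) n
  simpa only [show ∀ s : ℝ, x + y + n - (x + s) = y + n - s from fun s ↦ by ring] using h

/-- Abel's binomial theorem, case `A_n(x, y; -1, 0)`:
`Σ_{s=0}^{n} C(n,s) (x+s)^(s-1) (y+n-s)^(n-s) = x⁻¹ (x+y+n)^n`. -/
theorem abel_neg_one_zero (n : ℕ) (x y : ℝ) (hx : 0 < x) (hy : 0 ≤ y) :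
    ∑ s ∈ Finset.range (n + 1),
        (n.choose s : ℝ) * (x + s) ^ ((s : ℤ) - 1) * (y + n - s) ^ (n - s) =
      x⁻¹ * (x + y + n) ^ n :=
  abel_neg_one_zero_general n x y hx
end

section
/- For parking function π chosen uniformly at random from PF(m,n), the probability P(π₁ = j) equals (n−m+2)/((n−m+1)(n+1)) for every j with 1 ≤ j ≤ n−m+1; in particular P(π₁ = 1) = ⋯ = P(π₁ = n−m+1). -/
open Finset

namespace ParkingFunction

section Records

def IsRecord (f : ℕ → ℤ) (x : ℕ) : Prop := ∀ y < x, f y < f x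

instance (f : ℕ → ℤ) : DecidablePred (IsRecord f) := fun _ => Nat.decidableBallLT _ _

def prefixMax (f : ℕ → ℤ) (a : ℕ) : ℤ := (range (a + 1)).sup' nonempty_range_add_one f

variable {f : ℕ → ℤ}

lemma le_prefixMax {y a : ℕ} (h : y ≤ a) : f y ≤ prefixMax f a :=
  le_sup' f (mem_range.2 (Nat.lt_succ_of_le h))

lemma prefixMax_le_iff {a : ℕ} {c : ℤ} : prefixMax f a ≤ c ↔ ∀ y ≤ a, f y ≤ c := by
  simp [prefixMax]

lemma exists_eq_prefixMax (a : ℕ) : ∃ y ≤ a, f y = prefixMax f a := by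
  obtain ⟨y, hy, h⟩ := exists_mem_eq_sup' nonempty_range_add_one f
  exact ⟨y, Nat.lt_succ_iff.1 (mem_range.1 hy), h.symm⟩

lemma isRecord_succ_iff {x : ℕ} : IsRecord f (x + 1) ↔ prefixMax f x < f (x + 1) := by
  simp [IsRecord, prefixMax]

lemma prefixMax_succ (x : ℕ) : prefixMax f (x + 1) = max (prefixMax f x) (f (x + 1)) := by
  simp only [prefixMax, range_add_one (n := x + 1)]
  exact (sup'_insert ..).trans (max_comm ..)

/-- A walk with up-steps of size at most one climbs to each new height exactly once, at a record. -/
lemma card_records_Ioc (hf : ∀ x, f (x + 1) ≤ f x + 1) {a b : ℕ} (hab : a ≤ b) :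
    (#{x ∈ Ioc a b | IsRecord f x} : ℤ) = prefixMax f b - prefixMax f a := by
  induction b, hab using Nat.le_induction with
  | base => simp
  | succ b hab ih =>
    rw [card_filter, sum_Ioc_succ_top hab, ← card_filter, Nat.cast_add, ih, prefixMax_succ]
    have hstep := hf b
    have hmax := le_prefixMax (f := f) (le_refl b)
    by_cases h : IsRecord f (b + 1)
    · have := isRecord_succ_iff.1 h
      simp only [h, if_true, Nat.cast_one, max_eq_right this.le]
      omega
    · have := isRecord_succ_iff.not.1 h
      simp only [h, if_false, Nat.cast_zero, max_eq_left (not_lt.1 this)]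
      ring

variable {p : ℕ} {r : ℤ}

lemma apply_add_mul_period (hf : ∀ x, f (x + p) = f x + r) (x j : ℕ) :
    f (x + j * p) = f x + j * r := by
  induction j with
  | zero => simp
  | succ j ih => rw [Nat.succ_mul, ← add_assoc, hf, ih]; push_cast; ring

lemma isRecord_iff_of_add_period (hp : 0 < p) (hr : 0 ≤ r) (hf : ∀ x, f (x + p) = f x + r)
    (x : ℕ) : IsRecord f x ↔ ∀ y, x - p ≤ y → y < x → f y < f x := by
  refine ⟨fun h y _ hy => h y hy, fun h y hy => ?_⟩
  -- shift `y` by whole periods into the window `[x - p, x)`; this does not decrease `f`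
  set j := (x - 1 - y) / p
  have hdiv : p * j + (x - 1 - y) % p = x - 1 - y := Nat.div_add_mod _ _
  have hmod : (x - 1 - y) % p < p := Nat.mod_lt _ hp
  have hle : f y ≤ f (y + j * p) := by
    rw [apply_add_mul_period hf]
    have : (0 : ℤ) ≤ j * r := by positivity
    omega
  exact hle.trans_lt (h _ (by rw [mul_comm] at hdiv; omega) (by rw [mul_comm] at hdiv; omega))

lemma prefixMax_add_period (hr : 0 ≤ r) (hf : ∀ x, f (x + p) = f x + r) {a : ℕ} (hpa : p ≤ a) :
    prefixMax f (a + p) = prefixMax f a + r := by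
  refine le_antisymm (prefixMax_le_iff.2 fun y hy => ?_) ?_
  · by_cases hyp : p ≤ y
    · have := hf (y - p)
      rw [Nat.sub_add_cancel hyp] at this
      have := le_prefixMax (f := f) (show y - p ≤ a by omega)
      omega
    · have := le_prefixMax (f := f) (show y ≤ a by omega)
      omega
  · obtain ⟨y, hy, hmax⟩ := exists_eq_prefixMax (f := f) a
    rw [← hmax, ← hf]
    exact le_prefixMax (by omega)

end Records

section CycleLemma

/-- `w z` counts the cars preferring spot `z` on the circle `ZMod q`; under circular parking
spot `s` stays free iff every arc ending at `s` holds fewer cars than it has spots. -/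
def IsFreeSpot {q : ℕ} (w : ZMod q → ℕ) (s : ZMod q) : Prop :=
  ∀ t ∈ Icc 1 q, ∑ i ∈ range t, w (s - i) < t

instance {q : ℕ} (w : ZMod q → ℕ) : DecidablePred (IsFreeSpot w) := fun _ => by
  unfold IsFreeSpot; infer_instance

def liftWalk {q : ℕ} (w : ZMod q → ℕ) (x : ℕ) : ℤ := x - ∑ y ∈ range x, (w y : ℤ)

variable {q : ℕ} (w : ZMod q → ℕ)

lemma liftWalk_succ (x : ℕ) : liftWalk w (x + 1) = liftWalk w x + 1 - w x := by
  simp only [liftWalk, sum_range_succ]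
  push_cast
  ring

lemma sum_arc_add_liftWalk {s : ZMod q} {x : ℕ} (hx : (x : ZMod q) = s) {t : ℕ}
    (ht : t ≤ x + 1) :
    ((∑ i ∈ range t, w (s - i) : ℕ) : ℤ) + liftWalk w (x + 1) = t + liftWalk w (x + 1 - t) := by
  push_cast
  induction t with
  | zero => simp
  | succ t ih =>
    have hxt : x + 1 - t = (x - t) + 1 := by omega
    have hw : ((x - t : ℕ) : ZMod q) = s - t := by rw [Nat.cast_sub (by omega), hx]
    rw [sum_range_succ, add_right_comm, ih (by omega), hxt, liftWalk_succ, hw,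
      show x + 1 - (t + 1) = x - t by omega]
    push_cast
    ring

variable [NeZero q]

lemma sum_range_natCast {M : Type*} [AddCommMonoid M] (g : ZMod q → M) :
    ∑ i ∈ range q, g i = ∑ z, g z :=
  sum_nbij' (fun i => (i : ZMod q)) ZMod.val (by simp) (by simp [ZMod.val_lt])
    (fun i hi => ZMod.val_cast_of_lt (mem_range.1 hi)) (fun z _ => ZMod.natCast_zmod_val z)
    (fun _ _ => rfl)

lemma liftWalk_add_period (x : ℕ) :
    liftWalk w (x + q) = liftWalk w x + (q - ∑ z, (w z : ℤ)) := by
  simp only [liftWalk, add_comm x q, sum_range_add, sum_range_natCast (fun z => (w z : ℤ))]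
  simp only [Nat.cast_add, ZMod.natCast_self, zero_add]
  ring

variable {w}

lemma isFreeSpot_iff_isRecord (hw : ∑ z, w z ≤ q) (s : ZMod q) :
    IsFreeSpot w s ↔ IsRecord (liftWalk w) (s.val + q + 1) := by
  have hr : (0 : ℤ) ≤ q - ∑ z, (w z : ℤ) := by rw [sub_nonneg]; exact_mod_cast hw
  rw [isRecord_iff_of_add_period (NeZero.pos q) hr (liftWalk_add_period w)]
  have hq := NeZero.pos q
  have arc : ∀ t, t ≤ q → ((∑ i ∈ range t, w (s - i) : ℕ) : ℤ) + liftWalk w (s.val + q + 1)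
      = t + liftWalk w (s.val + q + 1 - t) := fun t ht =>
    sum_arc_add_liftWalk w (by simp) (by omega)
  constructor
  · intro h y hy1 hy2
    have hfree := h (s.val + q + 1 - y) (mem_Icc.2 ⟨by omega, by omega⟩)
    have := arc (s.val + q + 1 - y) (by omega)
    rw [Nat.sub_sub_self hy2.le] at this
    omega
  · intro h t ht
    obtain ⟨ht1, ht2⟩ := mem_Icc.1 ht
    have := h (s.val + q + 1 - t) (by omega) (by omega)
    have := arc t ht2
    omega

/-- The cycle lemma of Dvoretzky and Motzkin, in its parking form. -/
theorem card_isFreeSpot (hw : ∑ z, w z < q) : #{s | IsFreeSpot w s} = q - ∑ z, w z := by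
  have hrec : (#{x ∈ Ioc q (q + q) | IsRecord (liftWalk w) x} : ℤ) = q - ∑ z, (w z : ℤ) := by
    rw [card_records_Ioc (fun x => by rw [liftWalk_succ]; omega) (Nat.le_add_right q q),
      prefixMax_add_period _ (liftWalk_add_period w) le_rfl]
    · ring
    · rw [sub_nonneg]; exact_mod_cast hw.le
  have hbij : #{s | IsFreeSpot w s} = #{x ∈ Ioc q (q + q) | IsRecord (liftWalk w) x} := by
    refine card_bij' (fun s _ => s.val + q + 1) (fun x _ => ((x - q - 1 : ℕ) : ZMod q))
      (fun s hs => ?_) (fun x hx => ?_) (fun s _ => ?_) (fun x hx => ?_)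
    · rw [mem_filter] at hs ⊢
      refine ⟨mem_Ioc.2 ⟨by omega, by have := s.val_lt; omega⟩, ?_⟩
      exact (isFreeSpot_iff_isRecord hw.le s).1 hs.2
    · rw [mem_filter, mem_Ioc] at hx
      rw [mem_filter, isFreeSpot_iff_isRecord hw.le, ZMod.val_cast_of_lt (by omega),
        show x - q - 1 + q + 1 = x by omega]
      exact ⟨mem_univ _, hx.2⟩
    · rw [show s.val + q + 1 - q - 1 = s.val by omega, ZMod.natCast_zmod_val]
    · rw [mem_filter, mem_Ioc] at hx
      rw [ZMod.val_cast_of_lt (by omega)]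
      omega
  zify [hw.le]
  rw [hbij, hrec]

end CycleLemma

section Pollak

variable {k q : ℕ}

def prefCount (τ : Fin k → ZMod q) (z : ZMod q) : ℕ := #{a | τ a = z}

lemma sum_prefCount [NeZero q] (τ : Fin k → ZMod q) : ∑ z, prefCount τ z = k := by
  simpa [prefCount] using (card_eq_sum_card_fiberwise (s := univ) (t := univ)
    (fun a _ => mem_univ (τ a))).symm

lemma prefCount_add_const (τ : Fin k → ZMod q) (s z : ZMod q) :
    prefCount (fun a => τ a + s) z = prefCount τ (z - s) := by
  simp only [prefCount, eq_sub_iff_add_eq]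

lemma isFreeSpot_prefCount_add_const (τ : Fin k → ZMod q) (s : ZMod q) :
    IsFreeSpot (prefCount fun a => τ a + s) s ↔ IsFreeSpot (prefCount τ) 0 := by
  simp only [IsFreeSpot, prefCount_add_const, sub_sub_cancel_left, zero_sub]

lemma sum_prefCount_neg [NeZero q] (τ : Fin k → ZMod q) {t : ℕ} (ht : t ≤ q) :
    ∑ i ∈ range t, prefCount τ (-i) = #{a | (-τ a).val < t} := by
  simp only [prefCount, card_filter]
  rw [sum_comm]
  refine sum_congr rfl fun a _ => ?_
  have hcast : ∀ i ∈ range t, (if τ a = -(i : ZMod q) then 1 else 0)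
      = if (-τ a).val = i then 1 else 0 := fun i hi => by
    refine if_congr ?_ rfl rfl
    rw [← neg_eq_iff_eq_neg]
    constructor
    · rintro h
      rw [h, ZMod.val_cast_of_lt ((mem_range.1 hi).trans_le ht)]
    · rintro rfl
      exact (ZMod.natCast_zmod_val (-τ a)).symm
  rw [sum_congr rfl hcast, sum_ite_eq]
  simp

/-- Rotating all preferences by `s` moves the free spots by `s`, so `q` times the number of
preference sequences leaving `0` free counts the pairs (sequence, free spot). -/
theorem card_isFreeSpot_prefCount_zero [NeZero q] (hk : k < q) :
    q * #{τ : Fin k → ZMod q | IsFreeSpot (prefCount τ) 0} = (q - k) * q ^ k := by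
  have hspot : ∀ s : ZMod q, #{τ : Fin k → ZMod q | IsFreeSpot (prefCount τ) s}
      = #{τ : Fin k → ZMod q | IsFreeSpot (prefCount τ) 0} := fun s =>
    (card_equiv (Equiv.addRight fun _ => s) fun τ => by
      simp only [mem_filter, mem_univ, true_and, Equiv.coe_addRight]
      exact (isFreeSpot_prefCount_add_const τ s).symm).symm
  have := card_mul_eq_card_mul (s := (univ : Finset (Fin k → ZMod q))) (t := univ)
    (fun τ s => IsFreeSpot (prefCount τ) s) (m := q - k)
    (fun τ _ => by
      simpa [bipartiteAbove, sum_prefCount] using card_isFreeSpot (w := prefCount τ)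
        (by rw [sum_prefCount]; exact hk))
    (fun s _ => hspot s)
  simpa [ZMod.card, mul_comm] using this.symm

end Pollak

section ParkingFunctions

variable {k n : ℕ}

lemma isPF_val_iff_isFreeSpot_zero (hk : k ≤ n) (τ : Fin k → ZMod (n + 1)) :
    IsPF k n (fun a => (τ a).val) ↔ IsFreeSpot (prefCount τ) 0 := by
  have hfree : IsFreeSpot (prefCount τ) 0 ↔ ∀ t ∈ Icc 1 (n + 1), #{a | (-τ a).val < t} < t :=
    forall₂_congr fun t ht => by simp only [← sum_prefCount_neg τ (mem_Icc.1 ht).2, zero_sub]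
  have hsplit (i : ℕ) : #{a | (τ a).val ≤ i} + #{a | i < (τ a).val} = k := by
    simpa using card_filter_add_card_filter_not (s := univ) (fun a => (τ a).val ≤ i)
  -- away from `0`, the arc of length `t` ending at `0` consists of the spots above `n + 1 - t`
  have harc (h0 : ∀ a, τ a ≠ 0) (t : ℕ) :
      #{a | (-τ a).val < t} = #{a | n + 1 - t < (τ a).val} :=
    congrArg card <| filter_congr fun a _ => by
      rw [ZMod.neg_val, if_neg (h0 a)]
      have := (τ a).val_lt
      have := ZMod.val_pos.2 (h0 a)
      omega
  rw [hfree, IsPF]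
  constructor
  · rintro ⟨hrange, hcount⟩ t ht
    have h0 : ∀ a, τ a ≠ 0 := fun a ha => by simpa [ha] using (hrange a).1
    obtain ⟨ht1, ht2⟩ := mem_Icc.1 ht
    rw [harc h0]
    have := hsplit (n + 1 - t)
    by_cases hi : n - k + 1 ≤ n + 1 - t
    · have := hcount (n + 1 - t) (by omega) hi
      omega
    · omega
  · intro h
    have h0 : ∀ a, τ a ≠ 0 := fun a ha => by
      have := h 1 (mem_Icc.2 ⟨le_rfl, by omega⟩)
      rw [Nat.lt_one_iff, card_eq_zero, filter_eq_empty_iff] at this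
      exact this (mem_univ a) (by simp [ha])
    refine ⟨fun a => ⟨ZMod.val_pos.2 (h0 a), Nat.lt_succ_iff.1 (τ a).val_lt⟩,
      fun i hi1 hi2 => ?_⟩
    have := h (n + 1 - i) (mem_Icc.2 ⟨by omega, by omega⟩)
    rw [harc h0, show n + 1 - (n + 1 - i) = i by omega] at this
    have := hsplit i
    omega

lemma card_isPF (hk : k ≤ n) :
    (n + 1) * Nat.card {π : Fin k → ℕ // IsPF k n π} = (n + 1 - k) * (n + 1) ^ k := by
  let e : {π : Fin k → ℕ // IsPF k n π} ≃ {τ : Fin k → ZMod (n + 1) // IsFreeSpot (prefCount τ) 0} :=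
    { toFun π := ⟨fun a => π.1 a, by
        rw [← isPF_val_iff_isFreeSpot_zero hk]
        convert π.2 using 2 with a
        exact ZMod.val_cast_of_lt (Nat.lt_succ_of_le (π.2.1 a).2)⟩
      invFun τ := ⟨fun a => (τ.1 a).val, (isPF_val_iff_isFreeSpot_zero hk _).2 τ.2⟩
      left_inv π := Subtype.ext <| funext fun a =>
        ZMod.val_cast_of_lt (Nat.lt_succ_of_le (π.2.1 a).2)
      right_inv τ := Subtype.ext <| funext fun a => ZMod.natCast_zmod_val (τ.1 a) }
  rw [Nat.card_congr e, Nat.card_eq_fintype_card, Fintype.card_subtype]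
  exact card_isFreeSpot_prefCount_zero (Nat.lt_succ_of_le hk)

lemma isPF_cons_iff {j : ℕ} (hj1 : 1 ≤ j) (hj : j + k ≤ n) (σ : Fin k → ℕ) :
    IsPF (k + 1) n (Fin.cons j σ) ↔ IsPF k n σ := by
  have hcard : ∀ i, j ≤ i → #{a | (Fin.cons j σ : Fin (k + 1) → ℕ) a ≤ i} = #{a | σ a ≤ i} + 1 := by
    intro i hi
    rw [card_filter, card_filter, Fin.sum_univ_succ]
    simp [hi, add_comm]
  simp only [IsPF, Fin.forall_fin_succ, Fin.cons_zero, Fin.cons_succ]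
  constructor
  · rintro ⟨⟨-, hrange⟩, hcount⟩
    refine ⟨hrange, fun i hi1 hi2 => ?_⟩
    have := hcount i hi1 (by omega)
    rw [hcard i (by omega)] at this
    omega
  · rintro ⟨hrange, hcount⟩
    refine ⟨⟨⟨hj1, by omega⟩, hrange⟩, fun i hi1 hi2 => ?_⟩
    rw [hcard i (by omega)]
    by_cases hi : i = n - k
    · omega
    · have := hcount i hi1 (by omega)
      omega

lemma card_isPF_head_eq {j : ℕ} (hj1 : 1 ≤ j) (hj : j + k ≤ n) :
    Nat.card {π : Fin (k + 1) → ℕ // IsPF (k + 1) n π ∧ π 0 = j}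
      = Nat.card {σ : Fin k → ℕ // IsPF k n σ} := by
  have cons_tail (π : {π : Fin (k + 1) → ℕ // IsPF (k + 1) n π ∧ π 0 = j}) :
      Fin.cons j (Fin.tail π.1) = π.1 :=
    calc Fin.cons j (Fin.tail π.1) = Fin.cons (π.1 0) (Fin.tail π.1) := by rw [π.2.2]
      _ = π.1 := Fin.cons_self_tail _
  exact Nat.card_congr
    { toFun π := ⟨Fin.tail π.1, (isPF_cons_iff hj1 hj _).1 (cons_tail π ▸ π.2.1)⟩
      invFun σ := ⟨Fin.cons j σ.1, (isPF_cons_iff hj1 hj _).2 σ.2, rfl⟩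
      left_inv π := Subtype.ext (cons_tail π)
      right_inv σ := Subtype.ext rfl }

end ParkingFunctions
end ParkingFunction

/-- For `π` uniform on `PF(m,n)`, `P(π₁ = j) = (n-m+2)/((n-m+1)(n+1))` for every
`j` with `1 ≤ j ≤ n - m + 1`; in particular `P(π₁ = 1) = ⋯ = P(π₁ = n-m+1)`. -/
theorem prob_first_coord_flat (m n j : ℕ) (hm : 1 ≤ m) (hmn : m ≤ n)
    (hj1 : 1 ≤ j) (hj2 : j ≤ n - m + 1) :
    (Nat.card {π : Fin m → ℕ // IsPF m n π ∧ π ⟨0, hm⟩ = j} : ℚ) /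
        (Nat.card {π : Fin m → ℕ // IsPF m n π} : ℚ) =
      ((n : ℚ) - m + 2) / ((((n : ℚ) - m + 1)) * ((n : ℚ) + 1)) := by
  obtain ⟨m, rfl⟩ : ∃ k, m = k + 1 := ⟨m - 1, by omega⟩
  rw [show (⟨0, hm⟩ : Fin (m + 1)) = 0 from rfl, ParkingFunction.card_isPF_head_eq hj1 (by omega)]
  have hA := ParkingFunction.card_isPF (k := m) (n := n) (by omega)
  have hB := ParkingFunction.card_isPF (k := m + 1) (n := n) hmn
  rw [← Nat.cast_inj (R := ℚ)] at hA hB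
  push_cast [Nat.cast_sub (by omega : m ≤ n + 1), Nat.cast_sub (by omega : m ≤ n)] at hA hB
  have hnm : (n : ℚ) - m ≠ 0 := sub_ne_zero.2 (by norm_cast; omega)
  have hq : (n : ℚ) + 1 ≠ 0 := by positivity
  have hB0 : (Nat.card {π : Fin (m + 1) → ℕ // IsPF (m + 1) n π} : ℚ) ≠ 0 := by
    intro h
    rw [h, mul_zero] at hB
    exact mul_ne_zero hnm (pow_ne_zero _ hq) hB.symm
  push_cast
  rw [show (n : ℚ) - (m + 1) + 2 = n - m + 1 by ring, show (n : ℚ) - (m + 1) + 1 = n - m by ring,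
    div_eq_div_iff hB0 (mul_ne_zero hnm hq)]
  apply mul_left_cancel₀ hq
  linear_combination ((n : ℚ) - m) * ((n : ℚ) + 1) * hA - ((n : ℚ) - m + 1) * hB
end
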